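/- Sharp amalgamation, free case: let A, B, C ∈ K₀ with C ≤ A primitive, C ≤ B, A ∩ B = C, and suppose every point of A - C is not incident with any line based in C. Then the canonical amalgam A ⊕_C B equals the free amalgam A ⊗_C B (domain A ∪ B with no collinear triples beyond those of A and of B), and A ⊗_C B ∈ K₀. -/
import Mathlib


open scoped Classical

/-- A simple matroid of rank ≤ 3 presented as a 3-hypergraph `(V, R)`:
`R` is irreflexive, symmetric, and satisfies the exchange axiom
(if `R a b c` and `R a b d` then `{a,b,c,d}` is an `R`-clique). -/
structure PlaneGeom (V : Type) where
  R : V → V → V → Prop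
  irrefl : ∀ a b c, R a b c → a ≠ b ∧ b ≠ c ∧ a ≠ c
  symm₁ : ∀ a b c, R a b c → R b a c
  symm₂ : ∀ a b c, R a b c → R a c b
  exchange : ∀ a b c d, R a b c → R a b d → c ≠ d → R a c d

/-- A line `ℓ` is based in `B` if it contains at least two points of `B`. -/
def BasedIn {V : Type} [DecidableEq V] (ℓ B : Finset V) : Prop := 2 ≤ (ℓ ∩ B).card

namespace PlaneGeom

variable {V : Type} [Fintype V] [DecidableEq V] (G : PlaneGeom V)

/-- A set of pairwise collinear points. -/
def IsClique (s : Finset V) : Prop :=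
  ∀ a ∈ s, ∀ b ∈ s, ∀ c ∈ s, a ≠ b → b ≠ c → a ≠ c → G.R a b c

/-- A (nontrivial) line of the submatroid induced on `X`: a maximal
`R`-clique in `X` of size at least 3. -/
def IsLine (X ℓ : Finset V) : Prop :=
  ℓ ⊆ X ∧ 3 ≤ ℓ.card ∧ G.IsClique ℓ ∧
    ∀ p ∈ X, p ∉ ℓ → ¬ G.IsClique (insert p ℓ)

/-- The set of nontrivial lines of the submatroid induced on `X`. -/
noncomputable def lines (X : Finset V) : Finset (Finset V) :=
  Finset.univ.filter (fun ℓ => G.IsLine X ℓ)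

/-- The predimension function `δ(X) = |X| - Σ_{ℓ ∈ L(X)} (|ℓ| - 2)`. -/
noncomputable def delta (X : Finset V) : ℤ :=
  (X.card : ℤ) - ∑ ℓ ∈ G.lines X, ((ℓ.card : ℤ) - 2)

/-- `A ≤ B` : `A` is a strong substructure of `B`. -/
def Strong (A B : Finset V) : Prop :=
  A ⊆ B ∧ ∀ X : Finset V, A ⊆ X → X ⊆ B → G.delta A ≤ G.delta X

/-- Membership in the class `K₀`: hereditarily nonnegative `δ`. -/
def InK0 (A : Finset V) : Prop := ∀ A' ⊆ A, 0 ≤ G.delta A'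

/-- `B` is a primitive strong extension of `A`. -/
def Primitive (A B : Finset V) : Prop :=
  G.Strong A B ∧ A ≠ B ∧
    ∀ B₀ : Finset V, A ⊆ B₀ → B₀ ⊆ B → G.Strong A B₀ → G.Strong B₀ B →
      B₀ = A ∨ B₀ = B

end PlaneGeom

namespace PlaneGeom

/-- The submatroid induced on `A ∪ B` by the ambient geometry is the canonical
amalgam `A ⊕_{A ∩ B} B`: every nontrivial line of `A ∪ B` is a line of `A`, a
line of `B`, or the union of a line of `A` and a line of `B` sharing at least
two points of `C = A ∩ B`. -/
def IsCanonicalAmalgam {V : Type} [Fintype V] [DecidableEq V]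
    (G : PlaneGeom V) (A B : Finset V) : Prop :=
  ∀ ℓ ∈ G.lines (A ∪ B),
    ℓ ⊆ A ∨ ℓ ⊆ B ∨
      (2 ≤ (ℓ ∩ (A ∩ B)).card ∧ G.IsLine A (ℓ ∩ A) ∧ G.IsLine B (ℓ ∩ B))

end PlaneGeom

namespace PlaneGeom

variable {V : Type} [Fintype V] [DecidableEq V] (G : PlaneGeom V)

lemma isClique_subset {s t : Finset V} (h : G.IsClique t) (hs : s ⊆ t) : G.IsClique s :=
  fun a ha b hb c hc hab hbc hac => h a (hs ha) b (hs hb) c (hs hc) hab hbc hac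

lemma mem_lines {X ℓ : Finset V} : ℓ ∈ G.lines X ↔ G.IsLine X ℓ := by
  simp [lines]

lemma clique_triple {a b c : V} (h : G.R a b c) : G.IsClique ({a, b, c} : Finset V) := by
  have h1 := G.symm₁ _ _ _ h
  have h2 := G.symm₂ _ _ _ h
  have h3 := G.symm₂ _ _ _ h1
  have h4 := G.symm₁ _ _ _ h2
  have h5 := G.symm₁ _ _ _ h3
  intro x hx y hy z hz hxy hyz hxz
  simp only [Finset.mem_insert, Finset.mem_singleton] at hx hy hz
  rcases hx with rfl | rfl | rfl <;> rcases hy with rfl | rfl | rfl <;>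
    rcases hz with rfl | rfl | rfl <;> simp_all

lemma clique_insert {ℓ : Finset V} {a b p : V} (hc : G.IsClique ℓ)
    (ha : a ∈ ℓ) (hb : b ∈ ℓ) (hab : a ≠ b) (hp : p ∉ ℓ) (hr : G.R a b p) :
    G.IsClique (insert p ℓ) := by
  have hax : ∀ x ∈ ℓ, x ≠ a → G.R a x p := by
    intro x hx hxa
    rcases eq_or_ne x b with rfl | hxb
    · exact hr
    · exact G.exchange a b x p (hc a ha b hb x hx hab (Ne.symm hxb) (Ne.symm hxa)) hr
        (fun h0 => hp (h0 ▸ hx))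
  have hxyp : ∀ x ∈ ℓ, ∀ y ∈ ℓ, x ≠ y → G.R x y p := by
    intro x hx y hy hxy
    rcases eq_or_ne x a with rfl | hxa
    · exact hax y hy (Ne.symm hxy)
    rcases eq_or_ne y a with rfl | hya
    · exact G.symm₁ _ _ _ (hax x hx hxa)
    have h1 := G.symm₁ _ _ _ (G.symm₂ _ _ _ (hax x hx hxa))
    have h2 := G.symm₁ _ _ _ (G.symm₂ _ _ _ (hax y hy hya))
    have h3 := G.exchange p a x y h1 h2 hxy
    exact G.symm₂ _ _ _ (G.symm₁ _ _ _ h3)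
  intro u hu v hv w hw huv hvw huw
  simp only [Finset.mem_insert] at hu hv hw
  rcases hu with rfl | hu
  · rcases hv with rfl | hv
    · exact absurd rfl huv
    rcases hw with rfl | hw
    · exact absurd rfl huw
    · exact G.symm₁ _ _ _ (G.symm₂ _ _ _ (hxyp v hv w hw hvw))
  · rcases hv with rfl | hv
    · rcases hw with rfl | hw
      · exact absurd rfl hvw
      · exact G.symm₂ _ _ _ (hxyp u hu w hw huw)
    · rcases hw with rfl | hw
      · exact hxyp u hu v hv huv
      · exact hc u hu v hv w hw huv hvw huw

lemma line_subset {X ℓ ℓ' : Finset V} {a b : V} (h : G.IsLine X ℓ) (h' : G.IsLine X ℓ')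
    (ha : a ∈ ℓ) (hb : b ∈ ℓ) (ha' : a ∈ ℓ') (hb' : b ∈ ℓ') (hab : a ≠ b) : ℓ' ⊆ ℓ := by
  intro p hp
  by_contra hpl
  have hpa : p ≠ a := fun h0 => hpl (h0 ▸ ha)
  have hpb : p ≠ b := fun h0 => hpl (h0 ▸ hb)
  have hr : G.R a b p := h'.2.2.1 a ha' b hb' p hp hab (Ne.symm hpb) (Ne.symm hpa)
  exact h.2.2.2 p (h'.1 hp) hpl (G.clique_insert h.2.2.1 ha hb hab hpl hr)

lemma line_eq {X ℓ ℓ' : Finset V} {a b : V} (h : G.IsLine X ℓ) (h' : G.IsLine X ℓ')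
    (ha : a ∈ ℓ) (hb : b ∈ ℓ) (ha' : a ∈ ℓ') (hb' : b ∈ ℓ') (hab : a ≠ b) : ℓ = ℓ' :=
  Finset.Subset.antisymm (G.line_subset h' h ha' hb' ha hb hab)
    (G.line_subset h h' ha hb ha' hb' hab)

lemma exists_line {X s : Finset V} (hsX : s ⊆ X) (h3 : 3 ≤ s.card) (hc : G.IsClique s) :
    ∃ ℓ, G.IsLine X ℓ ∧ s ⊆ ℓ := by
  obtain ⟨t, ht, hmax⟩ := Finset.exists_max_image
    (Finset.univ.filter fun t => s ⊆ t ∧ t ⊆ X ∧ G.IsClique t) Finset.card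
    ⟨s, by simp [hsX, hc]⟩
  simp only [Finset.mem_filter, Finset.mem_univ, true_and] at ht
  obtain ⟨hst, htX, htc⟩ := ht
  refine ⟨t, ⟨htX, le_trans h3 (Finset.card_le_card hst), htc, ?_⟩, hst⟩
  intro p hpX hpt hcl
  have hmem : insert p t ∈ Finset.univ.filter fun t => s ⊆ t ∧ t ⊆ X ∧ G.IsClique t := by
    simp only [Finset.mem_filter, Finset.mem_univ, true_and]
    exact ⟨hst.trans (Finset.subset_insert _ _), Finset.insert_subset hpX htX, hcl⟩
  have := hmax _ hmem
  rw [Finset.card_insert_of_notMem hpt] at this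
  omega

lemma exists_line_inter {X Z m : Finset V} (hXZ : X ⊆ Z) (hm : G.IsLine X m) :
    ∃ ℓ, G.IsLine Z ℓ ∧ ℓ ∩ X = m := by
  obtain ⟨ℓ, hℓ, hmℓ⟩ := G.exists_line (hm.1.trans hXZ) hm.2.1 hm.2.2.1
  refine ⟨ℓ, hℓ, ?_⟩
  apply Finset.Subset.antisymm
  · intro p hp
    simp only [Finset.mem_inter] at hp
    by_contra hpm
    exact hm.2.2.2 p hp.2 hpm (G.isClique_subset hℓ.2.2.1 (Finset.insert_subset hp.1 hmℓ))
  · exact Finset.subset_inter hmℓ hm.1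

lemma line_inter {X Z ℓ : Finset V} (hXZ : X ⊆ Z) (h : G.IsLine Z ℓ)
    (h3 : 3 ≤ (ℓ ∩ X).card) : G.IsLine X (ℓ ∩ X) := by
  refine ⟨Finset.inter_subset_right, h3,
    G.isClique_subset h.2.2.1 Finset.inter_subset_left, ?_⟩
  intro p hpX hpm hcl
  obtain ⟨a, ha, b, hb, hab⟩ := Finset.one_lt_card.mp (by omega : 1 < (ℓ ∩ X).card)
  have hpl : p ∉ ℓ := fun hp => hpm (Finset.mem_inter.mpr ⟨hp, hpX⟩)
  have haℓ : a ∈ ℓ := (Finset.mem_inter.mp ha).1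
  have hbℓ : b ∈ ℓ := (Finset.mem_inter.mp hb).1
  have hpa : p ≠ a := fun h0 => hpl (h0 ▸ haℓ)
  have hpb : p ≠ b := fun h0 => hpl (h0 ▸ hbℓ)
  have hr : G.R a b p := hcl a (Finset.mem_insert_of_mem ha) b (Finset.mem_insert_of_mem hb)
    p (Finset.mem_insert_self _ _) hab (Ne.symm hpb) (Ne.symm hpa)
  exact h.2.2.2 p (hXZ hpX) hpl (G.clique_insert h.2.2.1 haℓ hbℓ hab hpl hr)

/-- weight function for line contributions -/
def wf (a : ℕ) : ℤ := if 3 ≤ a then (a : ℤ) - 2 else 0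

lemma rep {X Z : Finset V} (hXZ : X ⊆ Z) :
    ∑ m ∈ G.lines X, ((m.card : ℤ) - 2) = ∑ ℓ ∈ G.lines Z, wf (ℓ ∩ X).card := by
  have h1 : ∑ ℓ ∈ G.lines Z, wf (ℓ ∩ X).card
      = ∑ ℓ ∈ (G.lines Z).filter (fun ℓ => 3 ≤ (ℓ ∩ X).card), (((ℓ ∩ X).card : ℤ) - 2) := by
    rw [Finset.sum_filter]
    exact Finset.sum_congr rfl fun ℓ _ => rfl
  rw [h1]
  symm
  apply Finset.sum_bij (i := fun (ℓ : Finset V) (_ : ℓ ∈ (G.lines Z).filter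
      (fun ℓ => 3 ≤ (ℓ ∩ X).card)) => ℓ ∩ X)
  · intro ℓ hℓ
    simp only [Finset.mem_filter] at hℓ
    exact (G.mem_lines).mpr (G.line_inter hXZ ((G.mem_lines).mp hℓ.1) hℓ.2)
  · intro ℓ₁ h₁ ℓ₂ h₂ heq
    simp only [Finset.mem_filter] at h₁ h₂
    obtain ⟨a, ha, b, hb, hab⟩ := Finset.one_lt_card.mp (by omega : 1 < (ℓ₁ ∩ X).card)
    have ha2 : a ∈ ℓ₂ ∩ X := heq ▸ ha
    have hb2 : b ∈ ℓ₂ ∩ X := heq ▸ hb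
    exact G.line_eq ((G.mem_lines).mp h₁.1) ((G.mem_lines).mp h₂.1)
      (Finset.mem_inter.mp ha).1 (Finset.mem_inter.mp hb).1
      (Finset.mem_inter.mp ha2).1 (Finset.mem_inter.mp hb2).1 hab
  · intro m hm
    obtain ⟨ℓ, hℓ, hint⟩ := G.exists_line_inter hXZ ((G.mem_lines).mp hm)
    have hcard : 3 ≤ (ℓ ∩ X).card := hint ▸ ((G.mem_lines).mp hm).2.1
    exact ⟨ℓ, by simp [Finset.mem_filter, (G.mem_lines).mpr hℓ, hcard], hint⟩
  · intro ℓ hℓ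
    rfl

lemma wf_ineq {a b c n : ℕ} (hca : c ≤ a) (hcb : c ≤ b) (han : a ≤ n) (hbn : b ≤ n)
    (h : a + b = n + c) (hn : 3 ≤ n) : wf a + wf b ≤ wf n + wf c := by
  unfold wf
  split_ifs <;> omega

lemma submod (X Y : Finset V) :
    G.delta (X ∪ Y) + G.delta (X ∩ Y) ≤ G.delta X + G.delta Y := by
  have hX : X ⊆ X ∪ Y := Finset.subset_union_left
  have hY : Y ⊆ X ∪ Y := Finset.subset_union_right
  have hXY : X ∩ Y ⊆ X ∪ Y := Finset.inter_subset_left.trans hX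
  have hU : ∑ m ∈ G.lines (X ∪ Y), ((m.card : ℤ) - 2)
      = ∑ ℓ ∈ G.lines (X ∪ Y), wf ℓ.card := by
    apply Finset.sum_congr rfl
    intro ℓ hℓ
    have h3 := ((G.mem_lines).mp hℓ).2.1
    simp [wf, h3]
  have key : ∑ ℓ ∈ G.lines (X ∪ Y), wf (ℓ ∩ X).card
        + ∑ ℓ ∈ G.lines (X ∪ Y), wf (ℓ ∩ Y).card
      ≤ ∑ ℓ ∈ G.lines (X ∪ Y), wf ℓ.card
        + ∑ ℓ ∈ G.lines (X ∪ Y), wf (ℓ ∩ (X ∩ Y)).card := by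
    rw [← Finset.sum_add_distrib, ← Finset.sum_add_distrib]
    apply Finset.sum_le_sum
    intro ℓ hℓ
    obtain ⟨hℓsub, h3, -, -⟩ := (G.mem_lines).mp hℓ
    have hunion : (ℓ ∩ X) ∪ (ℓ ∩ Y) = ℓ := by
      rw [← Finset.inter_union_distrib_left]
      exact Finset.inter_eq_left.mpr hℓsub
    have hinter : (ℓ ∩ X) ∩ (ℓ ∩ Y) = ℓ ∩ (X ∩ Y) := by
      ext x
      simp only [Finset.mem_inter]
      tauto
    have hcards := Finset.card_union_add_card_inter (ℓ ∩ X) (ℓ ∩ Y)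
    rw [hunion, hinter] at hcards
    refine wf_ineq ?_ ?_ ?_ ?_ hcards.symm h3
    · exact Finset.card_le_card (by intro x hx; simp only [Finset.mem_inter] at hx ⊢; tauto)
    · exact Finset.card_le_card (by intro x hx; simp only [Finset.mem_inter] at hx ⊢; tauto)
    · exact Finset.card_le_card Finset.inter_subset_left
    · exact Finset.card_le_card Finset.inter_subset_left
  have eA := G.rep hX
  have eB := G.rep hY
  have eC := G.rep hXY
  have ecard := Finset.card_union_add_card_inter X Y
  unfold delta
  rw [eA, eB, eC, hU]
  have ecard' : ((X ∪ Y).card : ℤ) + ((X ∩ Y).card : ℤ) = (X.card : ℤ) + (Y.card : ℤ) := by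
    exact_mod_cast congrArg (Nat.cast : ℕ → ℤ) ecard
  linarith

lemma strong_inter {C B Y : Finset V} (h : G.Strong C B) (hY : Y ⊆ B) :
    G.delta (Y ∩ C) ≤ G.delta Y := by
  have h1 := G.submod Y C
  have h2 := h.2 (Y ∪ C) Finset.subset_union_right (Finset.union_subset hY h.1)
  linarith

end PlaneGeom


/-- sharp amalgamation, free case: with `C = A ∩ B`, `C ≤ A`
primitive, `C ≤ B`, all in `K₀`, if no point of `A - C` is incident with a
line based in `C`, then the canonical amalgam `A ⊕_C B` is the free amalgam
(its only collinear triples are those of `A` and those of `B`) and it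
belongs to `K₀`. -/
theorem stmt_16 {V : Type} [Fintype V] [DecidableEq V] (G : PlaneGeom V)
    (A B : Finset V) (hA : G.InK0 A) (hB : G.InK0 B)
    (hCA : G.Primitive (A ∩ B) A) (hCB : G.Strong (A ∩ B) B)
    (hD : G.IsCanonicalAmalgam A B)
    (hfree : ∀ p ∈ A \ (A ∩ B), ∀ a ∈ A ∩ B, ∀ b ∈ A ∩ B, a ≠ b → ¬ G.R a b p) :
    (∀ a b c : V, a ∈ A ∪ B → b ∈ A ∪ B → c ∈ A ∪ B → G.R a b c →
        ((a ∈ A ∧ b ∈ A ∧ c ∈ A) ∨ (a ∈ B ∧ b ∈ B ∧ c ∈ B))) ∧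
      G.InK0 (A ∪ B) := by
  have part1 : ∀ a b c : V, a ∈ A ∪ B → b ∈ A ∪ B → c ∈ A ∪ B → G.R a b c →
      ((a ∈ A ∧ b ∈ A ∧ c ∈ A) ∨ (a ∈ B ∧ b ∈ B ∧ c ∈ B)) := by
    intro a b c ha hb hc hr
    obtain ⟨hab, hbc, hac⟩ := G.irrefl a b c hr
    have hsub : ({a, b, c} : Finset V) ⊆ A ∪ B := by
      intro x hx
      simp only [Finset.mem_insert, Finset.mem_singleton] at hx
      rcases hx with rfl | rfl | rfl <;> assumption
    have hcard : 3 ≤ ({a, b, c} : Finset V).card := by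
      rw [Finset.card_insert_of_notMem (by simp [hab, hac]),
        Finset.card_insert_of_notMem (by simp [hbc]), Finset.card_singleton]
    obtain ⟨ℓ, hℓ, hsℓ⟩ := G.exists_line hsub hcard (G.clique_triple hr)
    have haℓ : a ∈ ℓ := hsℓ (by simp)
    have hbℓ : b ∈ ℓ := hsℓ (by simp)
    have hcℓ : c ∈ ℓ := hsℓ (by simp)
    rcases hD ℓ ((G.mem_lines).mpr hℓ) with hℓA | hℓB | ⟨h2, -, -⟩
    · exact Or.inl ⟨hℓA haℓ, hℓA hbℓ, hℓA hcℓ⟩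
    · exact Or.inr ⟨hℓB haℓ, hℓB hbℓ, hℓB hcℓ⟩
    · have hℓB : ℓ ⊆ B := by
        intro p hp
        by_contra hpB
        have hpA : p ∈ A := by
          rcases Finset.mem_union.mp (hℓ.1 hp) with h0 | h0
          · exact h0
          · exact absurd h0 hpB
        obtain ⟨x, hx, y, hy, hxy⟩ := Finset.one_lt_card.mp
          (lt_of_lt_of_le one_lt_two h2)
        have hxC : x ∈ A ∩ B := (Finset.mem_inter.mp hx).2
        have hyC : y ∈ A ∩ B := (Finset.mem_inter.mp hy).2
        have hxℓ : x ∈ ℓ := (Finset.mem_inter.mp hx).1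
        have hyℓ : y ∈ ℓ := (Finset.mem_inter.mp hy).1
        have hxp : x ≠ p := fun h0 => hpB (h0 ▸ (Finset.mem_inter.mp hxC).2)
        have hyp : y ≠ p := fun h0 => hpB (h0 ▸ (Finset.mem_inter.mp hyC).2)
        have hrxy : G.R x y p := hℓ.2.2.1 x hxℓ y hyℓ p hp hxy hyp hxp
        exact hfree p (Finset.mem_sdiff.mpr ⟨hpA, fun h0 => hpB (Finset.mem_inter.mp h0).2⟩)
          x hxC y hyC hxy hrxy
      exact Or.inr ⟨hℓB haℓ, hℓB hbℓ, hℓB hcℓ⟩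
  refine ⟨part1, ?_⟩
  intro X hX
  -- every line of X lies in A or in B
  have hclass : ∀ ℓ ∈ G.lines X, ℓ ⊆ A ∨ ℓ ⊆ B := by
    intro ℓ hℓmem
    obtain ⟨hℓX, h3, hcl, -⟩ := (G.mem_lines).mp hℓmem
    by_contra hcon
    push_neg at hcon
    obtain ⟨hnA, hnB⟩ := hcon
    obtain ⟨p, hpℓ, hpA⟩ := Finset.not_subset.mp hnA
    obtain ⟨q, hqℓ, hqB⟩ := Finset.not_subset.mp hnB
    have hpq : p ≠ q := by
      rintro rfl
      rcases Finset.mem_union.mp (hX (hℓX hpℓ)) with h0 | h0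
      · exact hpA h0
      · exact hqB h0
    have hr3 : ∃ r ∈ ℓ, r ≠ p ∧ r ≠ q := by
      by_contra hcc
      push_neg at hcc
      have : ℓ ⊆ {p, q} := by
        intro r hrℓ
        rcases eq_or_ne r p with rfl | hrp
        · simp
        rcases eq_or_ne r q with rfl | hrq
        · simp
        · exact absurd hrq (not_not.mpr (hcc r hrℓ hrp))
      have := Finset.card_le_card this
      have h2 : ({p, q} : Finset V).card ≤ 2 := Finset.card_insert_le _ _ |>.trans (by simp)
      omega
    obtain ⟨r, hrℓ, hrp, hrq⟩ := hr3
    have hrr : G.R p q r := hcl p hpℓ q hqℓ r hrℓ hpq (Ne.symm hrq) (Ne.symm hrp)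
    rcases part1 p q r (hX (hℓX hpℓ)) (hX (hℓX hqℓ)) (hX (hℓX hrℓ)) hrr with h0 | h0
    · exact hpA h0.1
    · exact hqB h0.2.1
  have hXA : X ∩ A ⊆ X := Finset.inter_subset_left
  have hXB : X ∩ B ⊆ X := Finset.inter_subset_left
  have hXC : X ∩ (A ∩ B) ⊆ X := Finset.inter_subset_left
  have eA := G.rep hXA
  have eB := G.rep hXB
  have eC := G.rep hXC
  have hU : ∑ m ∈ G.lines X, ((m.card : ℤ) - 2)
      = ∑ ℓ ∈ G.lines X, PlaneGeom.wf ℓ.card := by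
    apply Finset.sum_congr rfl
    intro ℓ hℓ
    have h3 := ((G.mem_lines).mp hℓ).2.1
    simp [PlaneGeom.wf, h3]
  have keyeq : ∑ ℓ ∈ G.lines X, PlaneGeom.wf (ℓ ∩ (X ∩ A)).card
        + ∑ ℓ ∈ G.lines X, PlaneGeom.wf (ℓ ∩ (X ∩ B)).card
      = ∑ ℓ ∈ G.lines X, PlaneGeom.wf ℓ.card
        + ∑ ℓ ∈ G.lines X, PlaneGeom.wf (ℓ ∩ (X ∩ (A ∩ B))).card := by
    rw [← Finset.sum_add_distrib, ← Finset.sum_add_distrib]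
    apply Finset.sum_congr rfl
    intro ℓ hℓmem
    have hℓX : ℓ ⊆ X := ((G.mem_lines).mp hℓmem).1
    rcases hclass ℓ hℓmem with hℓA | hℓB
    · have e1 : ℓ ∩ (X ∩ A) = ℓ :=
        Finset.inter_eq_left.mpr (Finset.subset_inter hℓX hℓA)
      have e2 : ℓ ∩ (X ∩ B) = ℓ ∩ (X ∩ (A ∩ B)) := by
        ext x
        simp only [Finset.mem_inter]
        constructor
        · rintro ⟨h1, h2, h3⟩; exact ⟨h1, h2, hℓA h1, h3⟩
        · rintro ⟨h1, h2, h3, h4⟩; exact ⟨h1, h2, h4⟩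
      rw [e1, e2]
    · have e1 : ℓ ∩ (X ∩ B) = ℓ :=
        Finset.inter_eq_left.mpr (Finset.subset_inter hℓX hℓB)
      have e2 : ℓ ∩ (X ∩ A) = ℓ ∩ (X ∩ (A ∩ B)) := by
        ext x
        simp only [Finset.mem_inter]
        constructor
        · rintro ⟨h1, h2, h3⟩; exact ⟨h1, h2, h3, hℓB h1⟩
        · rintro ⟨h1, h2, h3, h4⟩; exact ⟨h1, h2, h3⟩
      rw [e1, e2]
      ring
  have hcards : (X.card : ℤ) + ((X ∩ (A ∩ B)).card : ℤ)
      = ((X ∩ A).card : ℤ) + ((X ∩ B).card : ℤ) := by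
    have h1 : (X ∩ A) ∪ (X ∩ B) = X := by
      ext x
      simp only [Finset.mem_union, Finset.mem_inter]
      constructor
      · tauto
      · intro hx
        rcases Finset.mem_union.mp (hX hx) with h0 | h0
        · exact Or.inl ⟨hx, h0⟩
        · exact Or.inr ⟨hx, h0⟩
    have h2 : (X ∩ A) ∩ (X ∩ B) = X ∩ (A ∩ B) := by
      ext x
      simp only [Finset.mem_inter]
      tauto
    have := Finset.card_union_add_card_inter (X ∩ A) (X ∩ B)
    rw [h1, h2] at this
    exact_mod_cast congrArg (Nat.cast : ℕ → ℤ) this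
  have hdA : 0 ≤ G.delta (X ∩ A) := hA _ Finset.inter_subset_right
  have hdBC : G.delta (X ∩ (A ∩ B)) ≤ G.delta (X ∩ B) := by
    have h0 := G.strong_inter hCB (Finset.inter_subset_right : X ∩ B ⊆ B)
    have heq : (X ∩ B) ∩ (A ∩ B) = X ∩ (A ∩ B) := by
      ext x
      simp only [Finset.mem_inter]
      tauto
    rwa [heq] at h0
  have hdelta : G.delta X
      = G.delta (X ∩ A) + G.delta (X ∩ B) - G.delta (X ∩ (A ∩ B)) := by
    unfold PlaneGeom.delta
    rw [eA, eB, eC, hU]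
    linarith
  linarith
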